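/- arXiv:2602.21417 — 7 statements merged into one kernel-verified Lean document; each statement's English description precedes it below -/
import Mathlib

section
/- Let 𝓜 be a finite set of even cardinality M = 2n, ψ : 𝓜 → 𝓜 an involution, y ∈ 𝓜 with ψ(y) ≠ y, and I ⊆ {1,…,M} a set of size k containing no index j with M+1−j ∈ I. Then the number of vectors x ∈ X_ψ such that {j ∈ {1,…,M} : x_j = y} = I (i.e. x_j = y exactly for the indices j ∈ I) equals (M−2)^(n−k). -/
open Finset

/-- The set of ψ-symmetric vectors of length `M`: vectors `x` with
`x (M+1-j) = ψ (x j)` for all `j` (0-indexed: `x j.rev = ψ (x j)`). -/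
def Xpsi (α : Type*) [Fintype α] [DecidableEq α] (M : ℕ) (ψ : α → α) :
    Finset (Fin M → α) :=
  Finset.univ.filter fun x => ∀ j : Fin M, x j.rev = ψ (x j)

/-- The number of occurrences of `y` among the components of `x`. -/
def occCount {α : Type*} {M : ℕ} [DecidableEq α] (x : Fin M → α) (y : α) : ℕ :=
  (Finset.univ.filter fun j => x j = y).card

/-- `mCount x k` is the number of elements occurring exactly `k` times among
the components of `x`. -/
def mCount {α : Type*} {M : ℕ} [Fintype α] [DecidableEq α] (x : Fin M → α) (k : ℕ) : ℕ :=
  (Finset.univ.filter fun y => occCount x y = k).card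

/-- The set of fixed points of `ψ`. -/
def fixPts (α : Type*) [Fintype α] [DecidableEq α] (ψ : α → α) : Finset α :=
  Finset.univ.filter fun y => ψ y = y

theorem stmt_2 {α : Type*} [Fintype α] [DecidableEq α] (n : ℕ) (hn : 1 ≤ n)
    (hcard : Fintype.card α = 2 * n) (ψ : α → α) (hψ : ∀ y, ψ (ψ y) = y)
    (y : α) (hy : ψ y ≠ y) (k : ℕ) (I : Finset (Fin (2 * n)))
    (hIk : I.card = k) (hI : ∀ j ∈ I, j.rev ∉ I) :
    ((Xpsi α (2 * n) ψ).filter fun x =>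
        (Finset.univ.filter fun j => x j = y) = I).card = (2 * n - 2) ^ (n - k) := by
  classical
  -- embedding of first half
  set e : Fin n → Fin (2 * n) := fun i => ⟨i.val, by omega⟩ with he
  have hrev : ∀ j : Fin (2 * n), (j.rev : ℕ) = 2 * n - 1 - j.val := by
    intro j; simp [Fin.rev]; omega
  set B : Finset α := Finset.univ \ {y, ψ y} with hB
  have hBcard : B.card = 2 * n - 2 := by
    rw [hB, Finset.card_sdiff_of_subset (Finset.subset_univ _)]
    rw [Finset.card_univ, hcard, Finset.card_pair (Ne.symm hy)]
  set s : Fin n → Finset α := fun i =>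
    if e i ∈ I then {y} else if (e i).rev ∈ I then {ψ y} else B with hs
  -- bijection with piFinset s
  have hbij : ((Xpsi α (2 * n) ψ).filter fun x =>
        (Finset.univ.filter fun j => x j = y) = I).card = (Fintype.piFinset s).card := by
    refine Finset.card_bij' (fun x _ => fun i => x (e i))
      (fun g _ => fun j => if h : j.val < n then g ⟨j.val, h⟩
        else ψ (g ⟨2 * n - 1 - j.val, by omega⟩)) ?_ ?_ ?_ ?_
    · -- forward maps into piFinset
      intro x hx
      simp only [Finset.mem_filter, Xpsi, Finset.mem_univ, true_and] at hx
      obtain ⟨hx1, hx2⟩ := hx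
      have hxy : ∀ j, x j = y ↔ j ∈ I := by
        intro j
        rw [← hx2]; simp
      rw [Fintype.mem_piFinset]
      intro i
      rw [hs]
      by_cases h1 : e i ∈ I
      · simp [h1, (hxy (e i)).2 h1]
      · by_cases h2 : (e i).rev ∈ I
        · simp only [h1, if_false, h2, if_true, Finset.mem_singleton]
          have := (hxy (e i).rev).2 h2
          rw [hx1 (e i)] at this
          have := congrArg ψ this
          rwa [hψ] at this
        · simp only [h1, if_false, h2, if_false, hB, Finset.mem_sdiff, Finset.mem_univ,
            true_and, Finset.mem_insert, Finset.mem_singleton]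
          push_neg
          refine ⟨fun h => h1 ((hxy _).1 h), fun h => h2 ?_⟩
          rw [← hxy, hx1 (e i), h, hψ]
    · -- backward maps into filter
      intro g hg
      rw [Fintype.mem_piFinset] at hg
      simp only [Finset.mem_filter, Xpsi, Finset.mem_univ, true_and]
      have key : ∀ i : Fin n, ∀ j : Fin (2 * n), j.val = i.val →
          ((g i = y ↔ j ∈ I) ∧ (g i = ψ y ↔ j.rev ∈ I)) := by
        intro i j hj
        have hei : e i = j := by apply Fin.ext; simp [he, hj]
        have hgi := hg i
        rw [hs] at hgi
        simp only [hei] at hgi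
        by_cases h1 : j ∈ I
        · rw [if_pos h1, Finset.mem_singleton] at hgi
          have h2 : j.rev ∉ I := hI _ h1
          rw [hgi]
          exact ⟨iff_of_true rfl h1, iff_of_false (fun h => hy h.symm) h2⟩
        · rw [if_neg h1] at hgi
          by_cases h2 : j.rev ∈ I
          · rw [if_pos h2, Finset.mem_singleton] at hgi
            rw [hgi]
            exact ⟨iff_of_false hy h1, iff_of_true rfl h2⟩
          · rw [if_neg h2, hB] at hgi
            simp only [Finset.mem_sdiff, Finset.mem_univ, true_and, Finset.mem_insert,
              Finset.mem_singleton, not_or] at hgi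
            exact ⟨iff_of_false hgi.1 h1, iff_of_false hgi.2 h2⟩
      constructor
      · intro j
        by_cases h : j.val < n
        · have hrj : ¬ ((j.rev : Fin (2*n)).val < n) := by rw [hrev]; omega
          rw [dif_neg hrj, dif_pos h]
          have hx : (⟨2 * n - 1 - (j.rev : Fin (2*n)).val, by omega⟩ : Fin n) = ⟨j.val, h⟩ := by
            apply Fin.ext; simp only [hrev]; omega
          rw [hx]
        · have hrj : ((j.rev : Fin (2*n)).val < n) := by rw [hrev]; omega
          rw [dif_pos hrj, dif_neg h, hψ]
          have hx : (⟨(j.rev : Fin (2*n)).val, hrj⟩ : Fin n)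
              = ⟨2 * n - 1 - j.val, by omega⟩ := by
            apply Fin.ext; simp only [hrev]
          rw [hx]
      · ext j
        simp only [Finset.mem_filter, Finset.mem_univ, true_and]
        by_cases h : j.val < n
        · rw [dif_pos h]
          exact (key ⟨j.val, h⟩ j rfl).1
        · rw [dif_neg h]
          set i : Fin n := ⟨2 * n - 1 - j.val, by omega⟩ with hi
          have hji : (e i).rev = j := by
            apply Fin.ext; rw [hrev]; simp only [he, hi]; omega
          have hk := (key i (e i) rfl).2
          rw [hji] at hk
          rw [← hk]
          constructor
          · intro hgy
            have := congrArg ψ hgy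
            rwa [hψ] at this
          · intro hgy; rw [hgy, hψ]
    · -- left inverse
      intro x hx
      simp only [Finset.mem_filter, Xpsi, Finset.mem_univ, true_and] at hx
      funext j
      beta_reduce
      by_cases h : j.val < n
      · rw [dif_pos h]
      · rw [dif_neg h]
        have hji : (e ⟨2 * n - 1 - j.val, by omega⟩) = j.rev := by
          apply Fin.ext; rw [hrev]
        rw [hji, hx.1 j, hψ]
    · -- right inverse
      intro g hg
      funext i
      beta_reduce
      rw [dif_pos i.isLt]
  rw [hbij, Fintype.card_piFinset]
  have hval : ∀ i : Fin n, (e i).val = i.val := fun i => rfl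
  have hrval : ∀ i : Fin n, ((e i).rev).val = 2 * n - 1 - i.val := fun i => by
    rw [hrev, hval]
  have hPk : (Finset.univ.filter fun i : Fin n => (e i ∈ I ∨ (e i).rev ∈ I)).card = k := by
    rw [← hIk]
    apply Finset.card_bij (fun i _ => if e i ∈ I then e i else (e i).rev)
    · intro i hi
      simp only [Finset.mem_filter, Finset.mem_univ, true_and] at hi
      by_cases h : e i ∈ I
      · simpa [h]
      · simp only [h, if_false]
        tauto
    · intro i1 h1 i2 h2 heq
      have c1 := i1.isLt; have c2 := i2.isLt
      apply Fin.ext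
      by_cases a1 : e i1 ∈ I <;> by_cases a2 : e i2 ∈ I <;>
          simp only [a1, a2, if_true, if_false] at heq <;>
          have hv := congrArg Fin.val heq <;>
          simp only [hval, hrval] at hv <;> (clear hs hbij; clear_value s; omega)
    · intro j hj
      by_cases h : j.val < n
      · have hej : e ⟨j.val, h⟩ = j := Fin.ext rfl
        refine ⟨⟨j.val, h⟩, ?_, ?_⟩
        · simp only [Finset.mem_filter, Finset.mem_univ, true_and]
          left; rw [hej]; exact hj
        · rw [hej, if_pos hj]
      · have hlt : 2 * n - 1 - j.val < n := by clear hs hbij; clear_value s; omega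
        set i : Fin n := ⟨2 * n - 1 - j.val, hlt⟩ with hi
        have hji : (e i).rev = j := by
          apply Fin.ext; rw [hrval]; simp only [hi]
          clear hs hbij; clear_value s; omega
        have hne : e i ∉ I := fun hc => hI _ hc (by rw [hji]; exact hj)
        refine ⟨i, ?_, ?_⟩
        · simp only [Finset.mem_filter, Finset.mem_univ, true_and]
          right; rw [hji]; exact hj
        · rw [if_neg hne, hji]
  have hsplit := Finset.card_filter_add_card_filter_not
      (s := (Finset.univ : Finset (Fin n)))
      (p := fun i : Fin n => (e i ∈ I ∨ (e i).rev ∈ I))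
  rw [Finset.card_univ, Fintype.card_fin, hPk] at hsplit
  calc ∏ i, (s i).card
      = ∏ i, if (e i ∈ I ∨ (e i).rev ∈ I) then 1 else 2 * n - 2 := by
        refine Finset.prod_congr rfl fun i _ => ?_
        rw [hs]
        by_cases h1 : e i ∈ I
        · simp [h1]
        · by_cases h2 : (e i).rev ∈ I
          · simp [h1, h2]
          · simp [h1, h2, hBcard]
    _ = (2 * n - 2) ^ (Finset.univ.filter
          fun i : Fin n => ¬(e i ∈ I ∨ (e i).rev ∈ I)).card := by
        rw [Finset.prod_ite, Finset.prod_const_one, one_mul, Finset.prod_const]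
    _ = (2 * n - 2) ^ (n - k) := by
        congr 1
        clear hs hbij; clear_value s
        omega
end

section
/- Let 𝓜 be a finite set of even cardinality M = 2n, ψ : 𝓜 → 𝓜 an involution, y ∈ 𝓜 a fixed point of ψ, and I ⊆ {1,…,M} a set of size k such that M+1−j ∈ I for every j ∈ I (so k is even). Then the number of vectors x ∈ X_ψ such that {j ∈ {1,…,M} : x_j = y} = I equals (M−1)^(n−k/2). -/
open Finset

/-! A ψ-symmetric vector of length `2n` is freely determined by its first half, the second
half being read off from `x (M+1-j) = ψ (x j)`. Since `ψ` is an involution fixing `y`, we have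
`x j = y ↔ x (M+1-j) = y`, so for a symmetric `I` the condition on the level set of `y` only
constrains the first half, which meets `I` in `k/2` positions: those are forced to equal `y`,
and each of the remaining `n - k/2` positions takes one of the `M - 1` other values. -/

open Function

theorem card_filter_fiber_eq_pow {ι α : Type*} [Fintype ι] [DecidableEq ι] [Fintype α]
    [DecidableEq α] (y : α) (J : Finset ι) :
    (univ.filter fun f : ι → α => univ.filter (fun i => f i = y) = J).card =
      (Fintype.card α - 1) ^ (Fintype.card ι - #J) := by
  have hpi : (univ.filter fun f : ι → α => univ.filter (fun i => f i = y) = J) =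
      Fintype.piFinset fun i => if i ∈ J then {y} else {y}ᶜ := by
    ext f
    simp only [Finset.ext_iff, mem_filter, mem_univ, true_and, Fintype.mem_piFinset]
    refine forall_congr' fun i => ?_
    split_ifs with hi <;> simp [hi]
  rw [hpi, Fintype.card_piFinset]
  simp only [apply_ite card, card_singleton, card_compl]
  rw [prod_ite, prod_const_one, prod_const, one_mul, filter_notMem_eq_sdiff, card_univ_sdiff]

section SymmExtend

variable {α : Type*} {n : ℕ} (ψ : α → α)

def symmExtend (f : Fin n → α) : Fin (n + n) → α :=
  Fin.append f fun i => ψ (f i.rev)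

variable {ψ}

@[simp]
theorem symmExtend_castAdd (f : Fin n → α) (i : Fin n) :
    symmExtend ψ f (Fin.castAdd n i) = f i :=
  Fin.append_left _ _ i

@[simp]
theorem symmExtend_addNat (f : Fin n → α) (i : Fin n) :
    symmExtend ψ f (i.addNat n) = ψ (f i.rev) := by
  rw [← Fin.natAdd_eq_addNat]
  exact Fin.append_right _ _ i

variable [Fintype α] [DecidableEq α]

theorem symmExtend_mem_Xpsi (hψ : Involutive ψ) (f : Fin n → α) :
    symmExtend ψ f ∈ Xpsi α (n + n) ψ := by
  simp only [Xpsi, mem_filter, mem_univ, true_and]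
  refine Fin.forall_fin_add _ |>.2 ⟨fun i => ?_, fun i => ?_⟩
  · simp [Fin.rev_castAdd]
  · simp [Fin.rev_addNat, hψ _]

theorem symmExtend_restrict_of_mem_Xpsi {x : Fin (n + n) → α} (hx : x ∈ Xpsi α (n + n) ψ) :
    symmExtend ψ (fun i => x (Fin.castAdd n i)) = x := by
  simp only [Xpsi, mem_filter, mem_univ, true_and] at hx
  funext j
  induction j using Fin.addCases with
  | left i => simp
  | right i => simpa [Fin.rev_castAdd] using (hx (Fin.castAdd n i.rev)).symm

theorem card_filter_Xpsi (hψ : Involutive ψ) (p : (Fin (n + n) → α) → Prop)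
    [DecidablePred p] :
    ((Xpsi α (n + n) ψ).filter p).card =
      (univ.filter fun f : Fin n → α => p (symmExtend ψ f)).card := by
  refine card_nbij' (fun x i => x (Fin.castAdd n i)) (symmExtend ψ) ?_ ?_ ?_ ?_
  · intro x hx
    simp only [coe_filter, Set.mem_ofPred_eq, mem_univ, true_and] at hx ⊢
    rw [symmExtend_restrict_of_mem_Xpsi hx.1]
    exact hx.2
  · intro f hf
    simp only [coe_filter, Set.mem_ofPred_eq, mem_univ, true_and] at hf ⊢
    exact ⟨symmExtend_mem_Xpsi hψ f, hf⟩
  · intro x hx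
    exact symmExtend_restrict_of_mem_Xpsi (mem_filter.1 hx).1
  · intro f _
    funext i
    exact symmExtend_castAdd f i

end SymmExtend

theorem rev_mem_iff_of_forall_rev_mem {m : ℕ} {I : Finset (Fin m)}
    (hI : ∀ j ∈ I, j.rev ∈ I) (j : Fin m) : j.rev ∈ I ↔ j ∈ I :=
  ⟨fun h => Fin.rev_rev j ▸ hI _ h, hI j⟩

theorem card_eq_two_mul_card_filter_castAdd {n : ℕ} {I : Finset (Fin (n + n))}
    (hI : ∀ j ∈ I, j.rev ∈ I) :
    #I = 2 * #(univ.filter fun i : Fin n => Fin.castAdd n i ∈ I) := by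
  have hright : ∑ i : Fin n, (if i.addNat n ∈ I then 1 else 0) =
      ∑ i : Fin n, (if Fin.castAdd n i ∈ I then 1 else 0) := by
    rw [← Equiv.sum_comp Fin.revPerm]
    simp only [Fin.revPerm_apply, ← rev_mem_iff_of_forall_rev_mem hI (Fin.addNat _ n),
      Fin.rev_addNat, Fin.rev_rev]
  calc #I = ∑ j : Fin (n + n), (if j ∈ I then 1 else 0) := by simp
    _ = 2 * ∑ i : Fin n, (if Fin.castAdd n i ∈ I then 1 else 0) := by
      rw [Fin.sum_univ_add]
      simp only [Fin.natAdd_eq_addNat, hright]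
      ring
    _ = 2 * #(univ.filter fun i : Fin n => Fin.castAdd n i ∈ I) := by rw [card_filter]

section Fiber

variable {α : Type*} [DecidableEq α] {n : ℕ} {ψ : α → α} {y : α}
  {I : Finset (Fin (n + n))}

theorem filter_symmExtend_eq_iff (hψ : Involutive ψ) (hy : ψ y = y)
    (hI : ∀ j ∈ I, j.rev ∈ I) (f : Fin n → α) :
    univ.filter (fun j => symmExtend ψ f j = y) = I ↔
      univ.filter (fun i => f i = y) = univ.filter fun i => Fin.castAdd n i ∈ I := by
  have hψy : ∀ a, ψ a = y ↔ a = y := fun a => by rw [hψ.eq_iff, hy]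
  simp only [Finset.ext_iff, mem_filter, mem_univ, true_and, Fin.forall_fin_add,
    symmExtend_castAdd, Fin.natAdd_eq_addNat, symmExtend_addNat, hψy]
  refine and_iff_left_of_imp fun h i => ?_
  rw [h, ← rev_mem_iff_of_forall_rev_mem hI, Fin.rev_castAdd, Fin.rev_rev]

end Fiber

-- Stated for any `M = n + n` so that it applies to `Fin (2 * n)` after `subst`.
theorem card_filter_Xpsi_fiber_eq {α : Type*} [Fintype α] [DecidableEq α] {M n : ℕ}
    (hM : M = n + n) {ψ : α → α} (hψ : Involutive ψ) {y : α} (hy : ψ y = y)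
    {I : Finset (Fin M)} (hI : ∀ j ∈ I, j.rev ∈ I) :
    ((Xpsi α M ψ).filter fun x => univ.filter (fun j => x j = y) = I).card =
      (Fintype.card α - 1) ^ (n - #I / 2) := by
  subst hM
  rw [card_filter_Xpsi hψ, filter_congr fun f _ => filter_symmExtend_eq_iff hψ hy hI f,
    card_filter_fiber_eq_pow, Fintype.card_fin, card_eq_two_mul_card_filter_castAdd hI,
    Nat.mul_div_cancel_left _ two_pos]

theorem stmt_3_general {α : Type*} [Fintype α] [DecidableEq α] (n : ℕ)
    (hcard : Fintype.card α = 2 * n) (ψ : α → α) (hψ : ∀ y, ψ (ψ y) = y)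
    (y : α) (hy : ψ y = y) (k : ℕ) (I : Finset (Fin (2 * n)))
    (hIk : I.card = k) (hI : ∀ j ∈ I, j.rev ∈ I) :
    ((Xpsi α (2 * n) ψ).filter fun x =>
        (Finset.univ.filter fun j => x j = y) = I).card = (2 * n - 1) ^ (n - k / 2) := by
  rw [card_filter_Xpsi_fiber_eq (two_mul n) hψ hy hI, hcard, hIk]

theorem stmt_3 {α : Type*} [Fintype α] [DecidableEq α] (n : ℕ) (hn : 1 ≤ n)
    (hcard : Fintype.card α = 2 * n) (ψ : α → α) (hψ : ∀ y, ψ (ψ y) = y)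
    (y : α) (hy : ψ y = y) (k : ℕ) (I : Finset (Fin (2 * n)))
    (hIk : I.card = k) (hI : ∀ j ∈ I, j.rev ∈ I) :
    ((Xpsi α (2 * n) ψ).filter fun x =>
        (Finset.univ.filter fun j => x j = y) = I).card = (2 * n - 1) ^ (n - k / 2) :=
  stmt_3_general n hcard ψ hψ y hy k I hIk hI
end

section
/- Let 𝓜 be a finite set of even cardinality M = 2n, ψ : 𝓜 → 𝓜 an involution, and k an odd positive integer. Then the sum over all x ∈ X_ψ of m_k(x) equals |𝓜 \ Fix(ψ)| · C(n, k) · 2^k · (M−2)^(n−k), where C(n,k) is the binomial coefficient. Equivalently, the average A(k,M) = (1/|X_ψ|) Σ_{x ∈ X_ψ} m_k(x)/M equals |𝓜 \ Fix(ψ)| · C(M/2, k) · 2^k · (M−2)^(M/2−k) / M^(M/2+1). -/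
open Finset

/-! A ψ-symmetric vector is determined by its first half `z`, and `y` occurs in it exactly as often
as `y` and `ψ y` together occur in `z`. For a fixed point `y` this count is even, hence never the
odd number `k`. Otherwise it is the number of coordinates of `z` in the pair `{y, ψ y}`, and
exactly `C(n, k) 2^k (M - 2)^(n - k)` vectors `z ∈ 𝓜^n` have `k` coordinates in a given pair.
Summing over `y` (double counting) gives the formula. -/

section Counting

variable {ι α : Type*} [Fintype ι] [DecidableEq ι] [Fintype α] [DecidableEq α]

lemma filter_filter_mem_eq_piFinset (S : Finset α) (T : Finset ι) :
    ({z : ι → α | ({i | z i ∈ S} : Finset ι) = T} : Finset (ι → α))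
      = Fintype.piFinset fun i => if i ∈ T then S else Sᶜ := by
  ext z
  simp only [mem_filter, mem_univ, true_and, Fintype.mem_piFinset, Finset.ext_iff]
  refine forall_congr' fun i => ?_
  split_ifs with hi <;> simp [hi]

lemma card_filter_filter_mem_eq (S : Finset α) (T : Finset ι) :
    #{z : ι → α | ({i | z i ∈ S} : Finset ι) = T}
      = #S ^ #T * (Fintype.card α - #S) ^ (Fintype.card ι - #T) := by
  rw [filter_filter_mem_eq_piFinset, Fintype.card_piFinset]
  simp only [apply_ite card]
  rw [prod_ite, prod_const, prod_const]
  simp only [subset_univ, filter_mem_eq_of_subset, card_compl, filter_not, ← compl_eq_univ_sdiff]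

lemma card_filter_card_filter_mem_eq (S : Finset α) (k : ℕ) :
    #{z : ι → α | #{i | z i ∈ S} = k}
      = (Fintype.card ι).choose k * #S ^ k * (Fintype.card α - #S) ^ (Fintype.card ι - k) := by
  have hmaps : Set.MapsTo (fun z : ι → α => ({i | z i ∈ S} : Finset ι))
      ({z : ι → α | #{i | z i ∈ S} = k} : Finset (ι → α))
      (powersetCard k (univ : Finset ι)) :=
    fun z hz => by simpa using hz
  rw [card_eq_sum_card_fiberwise hmaps]
  have hfiber : ∀ T ∈ powersetCard k (univ : Finset ι),
      #{z ∈ ({z : ι → α | #{i | z i ∈ S} = k} : Finset (ι → α)) |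
          ({i | z i ∈ S} : Finset ι) = T}
        = #S ^ k * (Fintype.card α - #S) ^ (Fintype.card ι - k) := by
    intro T hT
    rw [mem_powersetCard_univ] at hT
    rw [← hT, ← card_filter_filter_mem_eq, filter_filter]
    congr 1
    ext z
    simp only [mem_filter, mem_univ, true_and, and_iff_right_iff_imp]
    rintro rfl
    rfl
  rw [sum_congr rfl hfiber, sum_const, card_powersetCard, card_univ, smul_eq_mul, mul_assoc]

end Counting

section SymmetricVectors

variable {α : Type*} {ψ : α → α}

def symmExt (ψ : α → α) {n : ℕ} (z : Fin n → α) : Fin (n + n) → α :=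
  Fin.append z (ψ ∘ z ∘ Fin.rev)

lemma symmExt_injective (ψ : α → α) (n : ℕ) : Function.Injective (symmExt ψ (n := n)) :=
  fun z w h => by
    funext i
    simpa [symmExt] using congrFun h (Fin.castAdd n i)

variable [DecidableEq α]

lemma occCount_symmExt (hψ : Function.Involutive ψ) {n : ℕ} (z : Fin n → α) (y : α) :
    occCount (symmExt ψ z) y = #{i | z i = y} + #{i | z i = ψ y} := by
  rw [occCount, card_filter, Fin.sum_univ_add, card_filter, card_filter]
  simp only [symmExt, Fin.append_left, Fin.append_right, Function.comp_apply, hψ.eq_iff]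
  congr 1
  exact Equiv.sum_comp Fin.revPerm (fun i => if z i = ψ y then 1 else 0)

variable [Fintype α]

lemma symmExt_mem_Xpsi (hψ : Function.Involutive ψ) {n : ℕ} (z : Fin n → α) :
    symmExt ψ z ∈ Xpsi α (n + n) ψ := by
  simp only [Xpsi, mem_filter, mem_univ, true_and]
  intro j
  refine Fin.addCases (fun i => ?_) (fun i => ?_) j
  · rw [symmExt, Fin.rev_castAdd, ← Fin.natAdd_eq_addNat, Fin.append_right, Fin.append_left]
    simp
  · rw [symmExt, Fin.append_right, Fin.natAdd_eq_addNat, Fin.rev_addNat, Fin.append_left]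
    simp [hψ _]

lemma Xpsi_eq_image_symmExt (hψ : Function.Involutive ψ) (n : ℕ) :
    Xpsi α (n + n) ψ = univ.image (symmExt ψ) := by
  refine Subset.antisymm (fun x hx => ?_) (image_subset_iff.2 fun z _ => symmExt_mem_Xpsi hψ z)
  simp only [Xpsi, mem_filter, mem_univ, true_and] at hx
  refine mem_image.2 ⟨fun i => x (Fin.castAdd n i), mem_univ _, ?_⟩
  have hright :
      ψ ∘ (fun i => x (Fin.castAdd n i)) ∘ Fin.rev = fun i => x (Fin.natAdd n i) := by
    funext i
    rw [Function.comp_apply, Function.comp_apply, ← hx, Fin.rev_castAdd, Fin.rev_rev,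
      Fin.natAdd_eq_addNat]
  rw [symmExt, hright, Fin.append_castAdd_natAdd]

lemma card_filter_occCount_symmExt_of_isFixedPt (hψ : Function.Involutive ψ) {n k : ℕ}
    (hk : Odd k) {y : α} (hy : ψ y = y) :
    #{z : Fin n → α | occCount (symmExt ψ z) y = k} = 0 := by
  rw [card_eq_zero, filter_eq_empty_iff]
  intro z _ hz
  rw [occCount_symmExt hψ, hy, ← two_mul] at hz
  exact Nat.not_even_iff_odd.2 hk (hz ▸ even_two_mul _)

lemma card_filter_occCount_symmExt_of_not_isFixedPt (hψ : Function.Involutive ψ) (n k : ℕ)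
    {y : α} (hy : ψ y ≠ y) :
    #{z : Fin n → α | occCount (symmExt ψ z) y = k}
      = n.choose k * 2 ^ k * (Fintype.card α - 2) ^ (n - k) := by
  have hocc (z : Fin n → α) :
      occCount (symmExt ψ z) y = #{i | z i ∈ ({y, ψ y} : Finset α)} := by
    simp only [mem_insert, mem_singleton, filter_or]
    rw [occCount_symmExt hψ,
      card_union_of_disjoint (disjoint_filter.2 fun _ _ h h' => hy (h'.symm.trans h))]
  have hpair : #({y, ψ y} : Finset α) = 2 := card_pair hy.symm
  simp only [hocc]
  rw [card_filter_card_filter_mem_eq, hpair, Fintype.card_fin]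

theorem sum_mCount_Xpsi (hψ : Function.Involutive ψ) (n : ℕ) {k : ℕ} (hk : Odd k) :
    ∑ x ∈ Xpsi α (n + n) ψ, mCount x k
      = (Fintype.card α - #(fixPts α ψ)) * n.choose k * 2 ^ k
          * (Fintype.card α - 2) ^ (n - k) := by
  have hcount (y : α) : #{z : Fin n → α | occCount (symmExt ψ z) y = k}
      = if ψ y = y then 0 else n.choose k * 2 ^ k * (Fintype.card α - 2) ^ (n - k) := by
    split_ifs with hy
    · exact card_filter_occCount_symmExt_of_isFixedPt hψ hk hy
    · exact card_filter_occCount_symmExt_of_not_isFixedPt hψ n k hy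
  calc ∑ x ∈ Xpsi α (n + n) ψ, mCount x k
      = ∑ z : Fin n → α, mCount (symmExt ψ z) k := by
        rw [Xpsi_eq_image_symmExt hψ, sum_image fun z _ w _ h => symmExt_injective ψ n h]
    _ = ∑ y : α, #{z : Fin n → α | occCount (symmExt ψ z) y = k} :=
        sum_card_bipartiteAbove_eq_sum_card_bipartiteBelow _
    _ = ∑ y : α, if ψ y = y then 0 else n.choose k * 2 ^ k * (Fintype.card α - 2) ^ (n - k) :=
        sum_congr rfl fun y _ => hcount y
    _ = _ := by
        rw [sum_ite, sum_const_zero, zero_add, sum_const, smul_eq_mul, ← compl_filter, card_compl,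
          fixPts, mul_assoc, mul_assoc, mul_assoc]

end SymmetricVectors

theorem stmt_4 {α : Type*} [Fintype α] [DecidableEq α] (n : ℕ) (hn : 1 ≤ n)
    (hcard : Fintype.card α = 2 * n) (ψ : α → α) (hψ : ∀ y, ψ (ψ y) = y)
    (k : ℕ) (hk : Odd k) :
    (∑ x ∈ Xpsi α (2 * n) ψ, mCount x k
        = (Fintype.card α - (fixPts α ψ).card) * n.choose k * 2 ^ k
            * (2 * n - 2) ^ (n - k)) ∧
      ((2 * (n : ℝ)) ^ n)⁻¹ *
          ∑ x ∈ Xpsi α (2 * n) ψ, (mCount x k : ℝ) / (2 * (n : ℝ))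
        = ((Fintype.card α : ℝ) - (fixPts α ψ).card) * n.choose k * 2 ^ k
            * (2 * (n : ℝ) - 2) ^ (n - k) / (2 * (n : ℝ)) ^ (n + 1) := by
  have hsum : ∑ x ∈ Xpsi α (2 * n) ψ, mCount x k
      = (Fintype.card α - #(fixPts α ψ)) * n.choose k * 2 ^ k * (2 * n - 2) ^ (n - k) := by
    have h := sum_mCount_Xpsi hψ n hk
    rw [← two_mul] at h
    rw [h, hcard]
  refine ⟨hsum, ?_⟩
  rw [← sum_div, ← Nat.cast_sum, hsum, inv_mul_eq_div, div_div, ← pow_succ']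
  norm_num [Nat.cast_sub (card_le_univ (fixPts α ψ)), Nat.cast_sub (show 2 ≤ 2 * n by omega)]
end

section
/- Let 𝓜 be a finite set of even cardinality M = 2n, ψ : 𝓜 → 𝓜 an involution, y, y' ∈ 𝓜 with y ≠ y' and ψ(y) ≠ y, and let I ⊆ {1,…,M} have size k with no j ∈ I satisfying M+1−j ∈ I, and let I' = {M+1−j : j ∈ I}. If y' = ψ(y), then the number of vectors x ∈ X_ψ such that {j : x_j = y} = I and {j : x_j = y'} = I' equals (M−2)^(n−k). -/
open Finset

theorem stmt_6 {α : Type*} [Fintype α] [DecidableEq α] (n : ℕ) (hn : 1 ≤ n)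
    (hcard : Fintype.card α = 2 * n) (ψ : α → α) (hψ : ∀ y, ψ (ψ y) = y)
    (y y' : α) (hne : y ≠ y') (hy : ψ y ≠ y) (hy' : y' = ψ y)
    (k : ℕ) (I : Finset (Fin (2 * n))) (hIk : I.card = k)
    (hI : ∀ j ∈ I, j.rev ∉ I) :
    ((Xpsi α (2 * n) ψ).filter fun x =>
        (Finset.univ.filter fun j => x j = y) = I ∧
          (Finset.univ.filter fun j => x j = y') = I.image Fin.rev).card
      = (2 * n - 2) ^ (n - k) := by
  classical
  have hψinj : Function.Injective ψ := Function.Involutive.injective hψ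
  have hmemrevI : ∀ j : Fin (2 * n), j ∈ I.image Fin.rev ↔ j.rev ∈ I := by
    intro j
    simp only [mem_image]
    constructor
    · rintro ⟨a, ha, rfl⟩; simpa [Fin.rev_rev] using ha
    · intro h; exact ⟨j.rev, h, Fin.rev_rev j⟩
  set T' : Finset (Fin (2 * n)) :=
    univ.filter (fun j => j.val < n ∧ j ∉ I ∧ j.rev ∉ I) with hT'def
  have hmemT' : ∀ j : Fin (2 * n), j ∈ T' ↔ j.val < n ∧ j ∉ I ∧ j.rev ∉ I := by
    intro j; simp [hT'def]
  have hrevT' : ∀ j : Fin (2 * n), j ∉ I → j.rev ∉ I → j ∉ T' → j.rev ∈ T' := by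
    intro j h1 h2 h3
    rw [hmemT'] at h3 ⊢
    rw [Fin.rev_rev]
    have hv : (Fin.rev j).val = 2 * n - (j.val + 1) := Fin.val_rev j
    have hnlt : ¬ j.val < n := fun h => h3 ⟨h, h1, h2⟩
    have := j.isLt
    exact ⟨by omega, h2, h1⟩
  have hT'lt : ∀ j : Fin (2 * n), j ∈ T' → ¬ (j.rev ∈ T') := by
    intro j hj hrj
    rw [hmemT'] at hj hrj
    have hv : (Fin.rev j).val = 2 * n - (j.val + 1) := Fin.val_rev j
    omega
  -- the extension map
  set e : ({j // j ∈ T'} → α) → Fin (2 * n) → α := fun f j =>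
    if j ∈ I then y
    else if j.rev ∈ I then y'
    else if h : j ∈ T' then f ⟨j, h⟩
    else if h2 : j.rev ∈ T' then ψ (f ⟨j.rev, h2⟩) else y with hedef
  set B : Finset ({j // j ∈ T'} → α) :=
    Fintype.piFinset (fun _ => (univ \ {y, y'} : Finset α)) with hBdef
  have hmemB : ∀ f, f ∈ B ↔ ∀ j, f j ≠ y ∧ f j ≠ y' := by
    intro f
    simp [hBdef, Fintype.mem_piFinset, not_or]
  have hcardeq : ((Xpsi α (2 * n) ψ).filter fun x =>
        (Finset.univ.filter fun j => x j = y) = I ∧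
          (Finset.univ.filter fun j => x j = y') = I.image Fin.rev).card = B.card := by
    apply Finset.card_bij' (fun x _ => fun j : {j // j ∈ T'} => x j)
      (fun f _ => e f)
    · -- forward maps into B
      intro x hx
      rw [mem_filter] at hx
      obtain ⟨hxX, hxy, hxy'⟩ := hx
      rw [hmemB]
      rintro ⟨j, hj⟩
      rw [hmemT'] at hj
      constructor
      · intro h
        have : j ∈ I := by rw [← hxy]; simp [h]
        exact hj.2.1 this
      · intro h
        have : j ∈ I.image Fin.rev := by rw [← hxy']; simp [h]
        exact hj.2.2 ((hmemrevI j).mp this)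
    · -- backward maps into S
      intro f hf
      rw [hmemB] at hf
      rw [mem_filter]
      refine ⟨?_, ?_, ?_⟩
      · rw [Xpsi, mem_filter]
        refine ⟨mem_univ _, ?_⟩
        intro j
        by_cases h1 : j ∈ I
        · have h2 : j.rev ∉ I := hI j h1
          have h3 : j.rev.rev ∈ I := by rwa [Fin.rev_rev]
          simp only [hedef, if_pos h1, if_neg h2, if_pos h3, ← hy']
        · by_cases h2 : j.rev ∈ I
          · have h3 : j.rev.rev ∉ I := by rwa [Fin.rev_rev]
            simp only [hedef, if_pos h2, if_neg h1, if_neg h3]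
            rw [hy', hψ]
          · have h3 : j.rev.rev ∉ I := by rwa [Fin.rev_rev]
            by_cases h4 : j ∈ T'
            · have h5 : j.rev ∉ T' := hT'lt j h4
              simp only [hedef, if_neg h1, if_neg h2, if_neg h3, dif_pos h4, dif_neg h5]
              have h6 : j.rev.rev ∈ T' := by rwa [Fin.rev_rev]
              rw [dif_pos h6]
              congr 1
              congr 1
              exact Subtype.ext (Fin.rev_rev j)
            · have h5 : j.rev ∈ T' := hrevT' j h1 h2 h4
              simp only [hedef, if_neg h1, if_neg h2, if_neg h3, dif_neg h4, dif_pos h5]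
              rw [hψ]
      · -- filter y = I
        ext j
        simp only [mem_filter, mem_univ, true_and]
        constructor
        · intro h
          by_contra h1
          by_cases h2 : j.rev ∈ I
          · simp only [hedef, if_neg h1, if_pos h2] at h
            exact hne h.symm
          · by_cases h4 : j ∈ T'
            · simp only [hedef, if_neg h1, if_neg h2, dif_pos h4] at h
              exact (hf ⟨j, h4⟩).1 h
            · have h5 : j.rev ∈ T' := hrevT' j h1 h2 h4
              simp only [hedef, if_neg h1, if_neg h2, dif_neg h4, dif_pos h5] at h
              have : f ⟨j.rev, h5⟩ = ψ y := by rw [← h, hψ]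
              exact (hf ⟨j.rev, h5⟩).2 (by rw [this, hy'])
        · intro h
          simp only [hedef, if_pos h]
      · -- filter y' = I.image rev
        ext j
        simp only [mem_filter, mem_univ, true_and, hmemrevI j]
        constructor
        · intro h
          by_contra h2
          by_cases h1 : j ∈ I
          · simp only [hedef, if_pos h1] at h
            exact hne h
          · by_cases h4 : j ∈ T'
            · simp only [hedef, if_neg h1, if_neg h2, dif_pos h4] at h
              exact (hf ⟨j, h4⟩).2 h
            · have h5 : j.rev ∈ T' := hrevT' j h1 h2 h4
              simp only [hedef, if_neg h1, if_neg h2, dif_neg h4, dif_pos h5] at h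
              have : f ⟨j.rev, h5⟩ = ψ y' := by rw [← h, hψ]
              rw [hy', hψ] at this
              exact (hf ⟨j.rev, h5⟩).1 this
        · intro h
          have h1 : j ∉ I := fun hj => hI j hj h
          simp only [hedef, if_neg h1, if_pos h]
    · -- left inverse
      intro x hx
      rw [mem_filter] at hx
      obtain ⟨hxX, hxy, hxy'⟩ := hx
      rw [Xpsi, mem_filter] at hxX
      funext j
      by_cases h1 : j ∈ I
      · have : x j = y := by
          have := hxy ▸ h1
          simpa using (hxy.symm ▸ h1 : j ∈ univ.filter fun j => x j = y)
        simp only [hedef, if_pos h1, this]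
      · by_cases h2 : j.rev ∈ I
        · have hmem : j ∈ I.image Fin.rev := (hmemrevI j).mpr h2
          have : x j = y' := by
            simpa using (hxy'.symm ▸ hmem : j ∈ univ.filter fun j => x j = y')
          simp only [hedef, if_neg h1, if_pos h2, this]
        · by_cases h4 : j ∈ T'
          · simp only [hedef, if_neg h1, if_neg h2, dif_pos h4]
          · have h5 : j.rev ∈ T' := hrevT' j h1 h2 h4
            simp only [hedef, if_neg h1, if_neg h2, dif_neg h4, dif_pos h5]
            rw [hxX.2 j, hψ]
    · -- right inverse
      intro f hf
      funext j
      obtain ⟨j, hj⟩ := j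
      have h := (hmemT' j).mp hj
      simp only [hedef, if_neg h.2.1, if_neg h.2.2, dif_pos hj]
  rw [hcardeq]
  have hBcard : B.card = (2 * n - 2) ^ T'.card := by
    rw [hBdef, Fintype.card_piFinset]
    have hc : (univ \ {y, y'} : Finset α).card = 2 * n - 2 := by
      rw [card_sdiff_of_subset (subset_univ _), card_univ, hcard]
      congr 1
      rw [card_insert_of_notMem (by simp [hne]), card_singleton]
    rw [Finset.prod_const, hc, Finset.card_univ, Fintype.card_coe]
  rw [hBcard]
  clear hBcard hcardeq hmemB hBdef hedef
  clear B e
  clear_value T'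
  congr 1
  -- T'.card = n - k
  have hTn : (univ.filter (fun j : Fin (2 * n) => j.val < n)).card = n := by
    have : (univ.filter (fun j : Fin (2 * n) => j.val < n)) = Finset.Iio (⟨n, by omega⟩ : Fin (2 * n)) := by
      ext j; simp [Fin.lt_def]
    rw [this, Fin.card_Iio]
  set A : Finset (Fin (2 * n)) := I ∪ I.image Fin.rev with hAdef
  have hT'eq : T' = (univ.filter (fun j : Fin (2 * n) => j.val < n)) \ A := by
    ext j
    rw [hmemT']
    simp [hAdef, hmemrevI j, and_assoc]
  have hinter : ((univ.filter (fun j : Fin (2 * n) => j.val < n)) ∩ A).card = k := by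
    rw [← hIk]
    apply Finset.card_bij' (fun j _ => if j ∈ I then j else j.rev)
      (fun i _ => if i.val < n then i else i.rev)
    · intro j hj
      rw [mem_inter, mem_filter] at hj
      obtain ⟨⟨_, hjn⟩, hjA⟩ := hj
      rw [hAdef, mem_union, hmemrevI] at hjA
      by_cases h : j ∈ I
      · simp [h]
      · rw [if_neg h]
        tauto
    · intro i hi
      rw [mem_inter, mem_filter, hAdef, mem_union, hmemrevI]
      have hlt := i.isLt
      by_cases h : i.val < n
      · rw [if_pos h]
        exact ⟨⟨mem_univ _, h⟩, Or.inl hi⟩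
      · rw [if_neg h]
        have hv : (Fin.rev i).val = 2 * n - (i.val + 1) := Fin.val_rev i
        rw [Fin.rev_rev]
        exact ⟨⟨mem_univ _, by omega⟩, Or.inr hi⟩
    · intro j hj
      rw [mem_inter, mem_filter] at hj
      obtain ⟨⟨_, hjn⟩, hjA⟩ := hj
      by_cases h : j ∈ I
      · simp [h, hjn]
      · rw [if_neg h]
        have hv : (Fin.rev j).val = 2 * n - (j.val + 1) := Fin.val_rev j
        have : ¬ (Fin.rev j).val < n := by omega
        rw [if_neg this, Fin.rev_rev]
    · intro i hi
      by_cases h : i.val < n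
      · simp [h, hi]
      · rw [if_neg h]
        have hrev : i.rev ∉ I := hI i hi
        rw [if_neg hrev, Fin.rev_rev]
  rw [hT'eq, ← Finset.sdiff_inter_self_left, card_sdiff_of_subset (inter_subset_left), hTn, hinter]
end

section
/- Let 𝓜 be a finite set of even cardinality M = 2n, ψ : 𝓜 → 𝓜 an involution, and let I, I' ⊆ {1,…,M} be disjoint sets, each of size k, such that no j ∈ I ∪ I' satisfies M+1−j ∈ I ∪ I'. Let y, y' ∈ 𝓜 with ψ(y) ≠ y, ψ(y') ≠ y', y' ≠ y and y' ≠ ψ(y). Then the number of vectors x ∈ X_ψ such that {j : x_j = y} = I and {j : x_j = y'} = I' equals (M−4)^(n−2k). -/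
open Finset

/-! A ψ-symmetric vector is determined by its first half, and the level-set conditions split
into independent conditions on the `n` pairs of positions `{j, M + 1 - j}`. By the mirror
condition each pair meets `I ∪ I'` at most once; the `2k` pairs that meet it have their value
forced, while each of the other `n - 2k` pairs may take any of the `M - 4` values outside
`{y, ψ y, y', ψ y'}`. -/

namespace SymmetricVector

variable {α : Type*} {n : ℕ}

def firstHalf (i : Fin n) : Fin (2 * n) := Fin.castLE (by omega) i

@[simp]
lemma val_firstHalf (i : Fin n) : (firstHalf i : ℕ) = i := rfl

/-- The index of the pair `{j, j.rev}` that contains `j`. -/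
def foldHalf (j : Fin (2 * n)) : Fin n := ⟨min (j : ℕ) j.rev, by simp only [Fin.val_rev]; omega⟩

lemma foldHalf_eq_foldHalf_iff {j j' : Fin (2 * n)} :
    foldHalf j = foldHalf j' ↔ j = j' ∨ j = j'.rev := by
  simp only [foldHalf, Fin.ext_iff, Fin.val_rev]
  omega

@[simp]
lemma foldHalf_rev (j : Fin (2 * n)) : foldHalf j.rev = foldHalf j :=
  foldHalf_eq_foldHalf_iff.2 (Or.inr rfl)

@[simp]
lemma foldHalf_firstHalf (i : Fin n) : foldHalf (firstHalf i) = i := by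
  ext
  simp only [foldHalf, val_firstHalf, Fin.val_rev]
  omega

lemma exists_firstHalf_eq_or_rev (j : Fin (2 * n)) :
    ∃ i, j = firstHalf i ∨ j = (firstHalf i).rev := by
  refine ⟨foldHalf j, ?_⟩
  simpa only [Fin.rev_rev] using
    foldHalf_eq_foldHalf_iff.1 (foldHalf_firstHalf (foldHalf j)).symm

def symmExtend (ψ : α → α) (g : Fin n → α) (j : Fin (2 * n)) : α :=
  if (j : ℕ) < n then g (foldHalf j) else ψ (g (foldHalf j))

@[simp]
lemma symmExtend_firstHalf (ψ : α → α) (g : Fin n → α) (i : Fin n) :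
    symmExtend ψ g (firstHalf i) = g i := by
  simp [symmExtend]

lemma symmExtend_rev {ψ : α → α} (hψ : Function.Involutive ψ) (g : Fin n → α)
    (j : Fin (2 * n)) : symmExtend ψ g j.rev = ψ (symmExtend ψ g j) := by
  have := j.isLt
  by_cases hj : (j : ℕ) < n
  · simp [symmExtend, hj, Fin.val_rev, show ¬ 2 * n - (j + 1) < n by omega]
  · simp [symmExtend, hj, Fin.val_rev, show 2 * n - (j + 1) < n by omega, hψ _]

lemma symmExtend_comp_firstHalf {ψ : α → α} {x : Fin (2 * n) → α}
    (hx : ∀ j, x j.rev = ψ (x j)) : symmExtend ψ (x ∘ firstHalf) = x := by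
  funext j
  obtain ⟨i, rfl | rfl⟩ := exists_firstHalf_eq_or_rev j
  · simp
  · have := i.isLt
    simp [symmExtend, Fin.val_rev, hx, show ¬ 2 * n - (i + 1) < n by omega]

theorem card_filter_Xpsi_forall [Fintype α] [DecidableEq α] {ψ : α → α}
    (hψ : Function.Involutive ψ) (P : Fin (2 * n) → α → Prop) [∀ j, DecidablePred (P j)] :
    ((Xpsi α (2 * n) ψ).filter fun x => ∀ j, P j (x j)).card =
      ∏ i : Fin n, (univ.filter fun a => P (firstHalf i) a ∧ P (firstHalf i).rev (ψ a)).card := by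
  rw [← Fintype.card_piFinset]
  refine card_nbij' (· ∘ firstHalf) (symmExtend ψ) ?_ ?_ ?_ ?_
  · intro x hx
    simp only [Xpsi, mem_coe, mem_filter, mem_univ, true_and] at hx
    simp only [mem_coe, Fintype.mem_piFinset, mem_filter, mem_univ, true_and, Function.comp_apply]
    exact fun i => ⟨hx.2 _, hx.1 _ ▸ hx.2 _⟩
  · intro g hg
    simp only [mem_coe, Fintype.mem_piFinset, mem_filter, mem_univ, true_and] at hg
    simp only [Xpsi, mem_coe, mem_filter, mem_univ, true_and]
    refine ⟨symmExtend_rev hψ g, fun j => ?_⟩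
    obtain ⟨i, rfl | rfl⟩ := exists_firstHalf_eq_or_rev j
    · simpa using (hg i).1
    · simpa [symmExtend_rev hψ] using (hg i).2
  · intro x hx
    simp only [Xpsi, mem_coe, mem_filter, mem_univ, true_and] at hx
    exact symmExtend_comp_firstHalf hx.1
  · intro g _
    funext i
    simp

end SymmetricVector

open SymmetricVector

theorem card_filter_forall_eq_iff {α ι : Type*} [Fintype α] [DecidableEq α] [Fintype ι]
    {v : ι → α} (hv : Function.Injective v) {p : ι → Prop} [DecidablePred p]
    (hp : ∀ t t', p t → p t' → t = t') :
    (univ.filter fun a => ∀ t, a = v t ↔ p t).card =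
      if ∃ t, p t then 1 else Fintype.card α - Fintype.card ι := by
  split_ifs with h
  · obtain ⟨t, ht⟩ := h
    refine card_eq_one.2 ⟨v t, ?_⟩
    ext a
    simp only [mem_filter, mem_univ, true_and, mem_singleton]
    refine ⟨fun ha => (ha t).2 ht, ?_⟩
    rintro rfl t'
    exact ⟨fun h => hv h ▸ ht, fun h => congrArg v (hp t t' ht h)⟩
  · push Not at h
    have : (univ.filter fun a => ∀ t, a = v t ↔ p t) = univ \ univ.image v := by
      ext a
      simp [h, eq_comm]
    rw [this, card_sdiff_of_subset (subset_univ _), card_image_of_injective _ hv, card_univ,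
      card_univ]

theorem card_filter_firstHalf_mem_or_rev_mem {n : ℕ} {J : Finset (Fin (2 * n))}
    (hJ : ∀ j ∈ J, j.rev ∉ J) :
    (univ.filter fun i : Fin n => firstHalf i ∈ J ∨ (firstHalf i).rev ∈ J).card = J.card := by
  refine (card_nbij foldHalf ?_ ?_ ?_).symm
  · intro j hj
    obtain ⟨i, rfl | rfl⟩ := exists_firstHalf_eq_or_rev j <;> simp_all
  · intro j hj j' hj' h
    rcases foldHalf_eq_foldHalf_iff.1 h with h | rfl
    · exact h
    · exact absurd hj (hJ _ hj')
  · intro i hi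
    simp only [coe_filter, mem_univ, true_and, Set.mem_ofPred_eq] at hi
    rcases hi with hi | hi
    · exact ⟨_, hi, foldHalf_firstHalf i⟩
    · exact ⟨_, hi, by simp⟩

theorem card_filter_levelSets_pair {α : Type*} [Fintype α] [DecidableEq α] {ψ : α → α}
    (hψ : Function.Involutive ψ) {y y' : α} (hy : ψ y ≠ y) (hy' : ψ y' ≠ y') (hne : y' ≠ y)
    (hne2 : y' ≠ ψ y) {M : ℕ} {I I' : Finset (Fin M)} (hdisj : Disjoint I I')
    (hmir : ∀ j ∈ I ∪ I', j.rev ∉ I ∪ I') (j : Fin M) :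
    (univ.filter fun a => ((a = y ↔ j ∈ I) ∧ (a = y' ↔ j ∈ I')) ∧
        ((ψ a = y ↔ j.rev ∈ I) ∧ (ψ a = y' ↔ j.rev ∈ I'))).card =
      if j ∈ I ∪ I' ∨ j.rev ∈ I ∪ I' then 1 else Fintype.card α - 4 := by
  classical
  -- The marks `j ∈ I`, `j ∈ I'`, `j.rev ∈ I`, `j.rev ∈ I'` prescribe `a = y`, `a = y'`,
  -- `a = ψ y`, `a = ψ y'` respectively, and at most one mark is present.
  have hv : Function.Injective ![y, y', ψ y, ψ y'] := by
    have h1 : ψ y ≠ ψ y' := fun h => hne (hψ.injective h).symm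
    have h2 : y ≠ ψ y' := fun h => hne2 (by rw [h, hψ])
    intro a b h
    fin_cases a <;> fin_cases b <;> simp [hy, hy', hne, hne2, h1, h2, hy.symm, hy'.symm,
      hne.symm, hne2.symm, h1.symm, h2.symm] at h ⊢
  have hp : ∀ t t' : Fin 4, ![j ∈ I, j ∈ I', j.rev ∈ I, j.rev ∈ I'] t →
      ![j ∈ I, j ∈ I', j.rev ∈ I, j.rev ∈ I'] t' → t = t' := by
    have hd : ∀ j, j ∈ I → j ∉ I' := fun _ h => Finset.disjoint_left.1 hdisj h
    have hd1 := hd j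
    have hd2 := hd j.rev
    have hm := hmir j
    simp only [mem_union] at hm
    intro t t'
    fin_cases t <;> fin_cases t' <;> simp <;> tauto
  convert card_filter_forall_eq_iff hv hp using 2
  · ext a
    simp [Fin.forall_fin_succ, hψ.eq_iff, and_assoc]
  · simp [Fin.exists_fin_succ, or_assoc]
  · simp

theorem stmt_7_general {α : Type*} [Fintype α] [DecidableEq α] (n : ℕ)
    (hcard : Fintype.card α = 2 * n) (ψ : α → α) (hψ : ∀ y, ψ (ψ y) = y)
    (k : ℕ) (I I' : Finset (Fin (2 * n))) (hdisj : Disjoint I I')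
    (hIk : I.card = k) (hI'k : I'.card = k)
    (hmir : ∀ j ∈ I ∪ I', j.rev ∉ I ∪ I')
    (y y' : α) (hy : ψ y ≠ y) (hy' : ψ y' ≠ y') (hne : y' ≠ y) (hne2 : y' ≠ ψ y) :
    ((Xpsi α (2 * n) ψ).filter fun x =>
        (Finset.univ.filter fun j => x j = y) = I ∧
          (Finset.univ.filter fun j => x j = y') = I').card
      = (2 * n - 4) ^ (n - 2 * k) := by
  have hlevel : ∀ x : Fin (2 * n) → α,
      ((univ.filter fun j => x j = y) = I ∧ (univ.filter fun j => x j = y') = I') ↔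
        ∀ j, (x j = y ↔ j ∈ I) ∧ (x j = y' ↔ j ∈ I') := by
    simp [Finset.ext_iff, forall_and]
  rw [filter_congr fun x _ => hlevel x,
    card_filter_Xpsi_forall hψ fun j a => (a = y ↔ j ∈ I) ∧ (a = y' ↔ j ∈ I'),
    prod_congr rfl fun i _ => card_filter_levelSets_pair hψ hy hy' hne hne2 hdisj hmir _,
    prod_ite, prod_const_one, one_mul, prod_const, hcard]
  have hmarked := card_filter_firstHalf_mem_or_rev_mem hmir
  rw [card_union_of_disjoint hdisj, hIk, hI'k] at hmarked
  have hsplit := card_filter_add_card_filter_not (s := univ)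
    (p := fun i : Fin n => firstHalf i ∈ I ∪ I' ∨ (firstHalf i).rev ∈ I ∪ I')
  rw [card_univ, Fintype.card_fin] at hsplit
  congr 1
  omega

theorem stmt_7 {α : Type*} [Fintype α] [DecidableEq α] (n : ℕ) (hn : 1 ≤ n)
    (hcard : Fintype.card α = 2 * n) (ψ : α → α) (hψ : ∀ y, ψ (ψ y) = y)
    (k : ℕ) (I I' : Finset (Fin (2 * n))) (hdisj : Disjoint I I')
    (hIk : I.card = k) (hI'k : I'.card = k)
    (hmir : ∀ j ∈ I ∪ I', j.rev ∉ I ∪ I')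
    (y y' : α) (hy : ψ y ≠ y) (hy' : ψ y' ≠ y') (hne : y' ≠ y) (hne2 : y' ≠ ψ y) :
    ((Xpsi α (2 * n) ψ).filter fun x =>
        (Finset.univ.filter fun j => x j = y) = I ∧
          (Finset.univ.filter fun j => x j = y') = I').card
      = (2 * n - 4) ^ (n - 2 * k) :=
  stmt_7_general n hcard ψ hψ k I I' hdisj hIk hI'k hmir y y' hy hy' hne hne2
end

section
/- Let 𝓜 be a finite set of even cardinality M = 2n, ψ : 𝓜 → 𝓜 an involution, x ∈ X_ψ, I, I' ⊆ {1,…,M} sets of equal size containing no index j with its mirror M+1−j in the same set, but such that some j ∈ I ∪ I' has M+1−j ∈ I ∪ I', and let y ≠ y' in 𝓜 be such that x_j = y exactly for j ∈ I and x_j = y' exactly for j ∈ I'. Then ψ(y) = y' (hence ψ(y') = y) and I' = {M+1−j : j ∈ I}. -/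
open Finset

theorem stmt_8 {α : Type*} [Fintype α] [DecidableEq α] (n : ℕ) (hn : 1 ≤ n)
    (hcard : Fintype.card α = 2 * n) (ψ : α → α) (hψ : ∀ y, ψ (ψ y) = y)
    (x : Fin (2 * n) → α) (hx : x ∈ Xpsi α (2 * n) ψ)
    (I I' : Finset (Fin (2 * n))) (hsize : I.card = I'.card)
    (hI : ∀ j ∈ I, j.rev ∉ I) (hI' : ∀ j ∈ I', j.rev ∉ I')
    (hcross : ∃ j ∈ I ∪ I', j.rev ∈ I ∪ I')
    (y y' : α) (hne : y ≠ y')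
    (hxy : (Finset.univ.filter fun j => x j = y) = I)
    (hxy' : (Finset.univ.filter fun j => x j = y') = I') :
    ψ y = y' ∧ ψ y' = y ∧ I' = I.image Fin.rev := by
  simp only [Xpsi, mem_filter, mem_univ, true_and] at hx
  have key : ∀ j : Fin (2 * n), x j = y ↔ j ∈ I := by
    intro j; rw [← hxy]; simp
  have key' : ∀ j : Fin (2 * n), x j = y' ↔ j ∈ I' := by
    intro j; rw [← hxy']; simp
  have hpsiy : ψ y = y' := by
    obtain ⟨j, hj, hjr⟩ := hcross
    rcases mem_union.mp hj with hjI | hjI' <;> rcases mem_union.mp hjr with h2 | h2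
    · exact absurd h2 (hI j hjI)
    · have h3 := hx j
      rw [(key j).mpr hjI, (key' j.rev).mpr h2] at h3
      exact h3.symm
    · have h3 := hx j
      rw [(key' j).mpr hjI', (key j.rev).mpr h2] at h3
      rw [h3, hψ]
    · exact absurd h2 (hI' j hjI')
  refine ⟨hpsiy, by rw [← hpsiy, hψ], ?_⟩
  ext j
  simp only [mem_image]
  constructor
  · intro hj
    refine ⟨j.rev, ?_, j.rev_rev⟩
    rw [← key, hx, (key' j).mpr hj, ← hpsiy, hψ]
  · rintro ⟨i, hi, rfl⟩
    rw [← key', hx, (key i).mpr hi, hpsiy]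
end

section
/- Let 𝓜 be a finite set of even cardinality M = 2n, ψ : 𝓜 → 𝓜 an involution, and k an odd positive integer. Write F̄ = |𝓜 \ Fix(ψ)|. Then Σ_{x ∈ X_ψ} m_k(x)² = Σ_{x ∈ X_ψ} m_k(x) + F̄ · C(n,k) · 2^k · (M−2)^(n−k) + F̄·(F̄−2) · C(n,k) · 2^k · C(n−k,k) · 2^k · (M−4)^(n−2k), where C(·,·) denotes binomial coefficients. -/
open Finset

set_option linter.unusedSectionVars false

section CountLemmas
variable {ι : Type*} [Fintype ι] [DecidableEq ι] {α : Type*} [Fintype α] [DecidableEq α]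

lemma cell_mem_one (S : Finset α) (T : Finset ι) (a : ι → α)
    (ha : a ∈ Fintype.piFinset fun i => if i ∈ T then S else Sᶜ) :
    (univ.filter fun i => a i ∈ S) = T := by
  ext i
  have := Fintype.mem_piFinset.mp ha i
  by_cases hi : i ∈ T <;> simp_all

lemma aux_count_one (S : Finset α) (k : ℕ) :
    (univ.filter fun a : ι → α => (univ.filter fun i => a i ∈ S).card = k).card
      = (Fintype.card ι).choose k * S.card ^ k
        * (Fintype.card α - S.card) ^ (Fintype.card ι - k) := by
  have key : (univ.filter fun a : ι → α => (univ.filter fun i => a i ∈ S).card = k)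
      = (univ.powersetCard k).biUnion
          (fun T => Fintype.piFinset fun i => if i ∈ T then S else Sᶜ) := by
    ext a
    simp only [mem_filter, mem_univ, true_and, mem_biUnion, mem_powersetCard]
    constructor
    · intro h
      refine ⟨_, ⟨subset_univ _, h⟩, Fintype.mem_piFinset.mpr fun i => ?_⟩
      by_cases hi : a i ∈ S <;> simp [hi]
    · rintro ⟨T, ⟨-, hT⟩, ha⟩
      rw [cell_mem_one S T a ha]; exact hT
  rw [key, card_biUnion]
  · have hcell : ∀ T ∈ univ.powersetCard k,
        (Fintype.piFinset fun i : ι => if i ∈ T then S else Sᶜ).card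
          = S.card ^ k * (Fintype.card α - S.card) ^ (Fintype.card ι - k) := by
      intro T hT
      obtain ⟨-, hTc⟩ := mem_powersetCard.mp hT
      rw [Fintype.card_piFinset]
      calc ∏ i : ι, (if i ∈ T then S else Sᶜ).card
          = ∏ i : ι, (if i ∈ T then S.card else Sᶜ.card) := by
            apply Finset.prod_congr rfl; intro i _; split <;> rfl
        _ = (∏ i ∈ T, (if i ∈ T then S.card else Sᶜ.card))
            * ∏ i ∈ Tᶜ, (if i ∈ T then S.card else Sᶜ.card) :=
            (Finset.prod_mul_prod_compl T _).symm
        _ = S.card ^ k * (Fintype.card α - S.card) ^ (Fintype.card ι - k) := by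
            rw [Finset.prod_congr rfl (fun i hi => if_pos hi),
              Finset.prod_congr rfl (fun i hi => if_neg (mem_compl.mp hi)),
              Finset.prod_const, Finset.prod_const, card_compl, hTc, card_compl, hTc]
    rw [Finset.sum_congr rfl hcell, Finset.sum_const, card_powersetCard, card_univ,
      smul_eq_mul, mul_assoc]
  · intro T hT T' hT' hne
    refine Finset.disjoint_left.mpr fun a ha ha' => hne ?_
    rw [← cell_mem_one S T a ha, cell_mem_one S T' a ha']

lemma cell_mem_two (S1 S2 : Finset α) (hd : Disjoint S1 S2) (T1 T2 : Finset ι)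
    (hT : Disjoint T1 T2) (a : ι → α)
    (ha : a ∈ Fintype.piFinset fun i => if i ∈ T1 then S1 else if i ∈ T2 then S2 else (S1 ∪ S2)ᶜ) :
    (univ.filter fun i => a i ∈ S1) = T1 ∧ (univ.filter fun i => a i ∈ S2) = T2 := by
  have h := fun i => Fintype.mem_piFinset.mp ha i
  have hd' := Finset.disjoint_left.mp hd
  have hT' := Finset.disjoint_left.mp hT
  constructor <;> ext i <;> simp only [mem_filter, mem_univ, true_and] <;> have hi := h i <;>
    by_cases h1 : i ∈ T1 <;> by_cases h2 : i ∈ T2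
  · exact absurd h2 (hT' h1)
  · rw [if_pos h1] at hi; exact iff_of_true hi h1
  · rw [if_neg h1, if_pos h2] at hi
    exact iff_of_false (fun hm => hd' hm hi) h1
  · rw [if_neg h1, if_neg h2] at hi
    exact iff_of_false (fun hm => (mem_compl.mp hi) (mem_union_left _ hm)) h1
  · exact absurd h2 (hT' h1)
  · rw [if_pos h1] at hi; exact iff_of_false (fun hm => hd' hi hm) h2
  · rw [if_neg h1, if_pos h2] at hi; exact iff_of_true hi h2
  · rw [if_neg h1, if_neg h2] at hi
    exact iff_of_false (fun hm => (mem_compl.mp hi) (mem_union_right _ hm)) h2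

lemma aux_count_two (S1 S2 : Finset α) (hd : Disjoint S1 S2) (k : ℕ) :
    (univ.filter fun a : ι → α =>
        (univ.filter fun i => a i ∈ S1).card = k ∧ (univ.filter fun i => a i ∈ S2).card = k).card
      = (Fintype.card ι).choose k * S1.card ^ k * ((Fintype.card ι - k).choose k) * S2.card ^ k
        * (Fintype.card α - S1.card - S2.card) ^ (Fintype.card ι - 2 * k) := by
  have hdisjT : ∀ T1 T2 : Finset ι, T2 ⊆ T1ᶜ → Disjoint T1 T2 := fun T1 T2 hsub =>
    Finset.disjoint_left.mpr fun i h1 h2 => (mem_compl.mp (hsub h2)) h1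
  have key : (univ.filter fun a : ι → α =>
        (univ.filter fun i => a i ∈ S1).card = k ∧ (univ.filter fun i => a i ∈ S2).card = k)
      = (univ.powersetCard k).biUnion fun T1 => (T1ᶜ.powersetCard k).biUnion fun T2 =>
          Fintype.piFinset fun i => if i ∈ T1 then S1 else if i ∈ T2 then S2 else (S1 ∪ S2)ᶜ := by
    ext a
    simp only [mem_filter, mem_univ, true_and, mem_biUnion, mem_powersetCard]
    constructor
    · rintro ⟨h1, h2⟩
      refine ⟨_, ⟨subset_univ _, h1⟩, _, ⟨fun i hi => ?_, h2⟩,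
        Fintype.mem_piFinset.mpr fun i => ?_⟩
      · simp only [mem_filter, mem_univ, true_and] at hi
        simp only [mem_compl, mem_filter, mem_univ, true_and]
        exact fun hmem => Finset.disjoint_left.mp hd hmem hi
      · by_cases hm1 : a i ∈ S1
        · simp [hm1]
        · by_cases hm2 : a i ∈ S2 <;> simp [hm1, hm2]
    · rintro ⟨T1, ⟨-, hT1⟩, T2, ⟨hsub, hT2⟩, ha⟩
      obtain ⟨e1, e2⟩ := cell_mem_two S1 S2 hd T1 T2 (hdisjT T1 T2 hsub) a ha
      rw [e1, e2]; exact ⟨hT1, hT2⟩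
  have hdisjOuter : ∀ T1 ∈ (univ : Finset ι).powersetCard k,
      ∀ T1' ∈ (univ : Finset ι).powersetCard k, T1 ≠ T1' →
      Disjoint ((T1ᶜ.powersetCard k).biUnion fun T2 =>
          Fintype.piFinset fun i => if i ∈ T1 then S1 else if i ∈ T2 then S2 else (S1 ∪ S2)ᶜ)
        ((T1'ᶜ.powersetCard k).biUnion fun T2 =>
          Fintype.piFinset fun i => if i ∈ T1' then S1 else if i ∈ T2 then S2 else (S1 ∪ S2)ᶜ) := by
    intro T1 h1 T1' h1' hne
    refine Finset.disjoint_left.mpr fun a ha ha' => hne ?_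
    simp only [mem_biUnion, mem_powersetCard] at ha ha'
    obtain ⟨T2, ⟨hs, -⟩, ha⟩ := ha
    obtain ⟨T2', ⟨hs', -⟩, ha'⟩ := ha'
    rw [← (cell_mem_two S1 S2 hd T1 T2 (hdisjT T1 T2 hs) a ha).1,
      (cell_mem_two S1 S2 hd T1' T2' (hdisjT T1' T2' hs') a ha').1]
  rw [key, card_biUnion hdisjOuter]
  have houter : ∀ T1 ∈ (univ : Finset ι).powersetCard k,
      ((T1ᶜ.powersetCard k).biUnion fun T2 =>
        Fintype.piFinset fun i => if i ∈ T1 then S1 else if i ∈ T2 then S2 else (S1 ∪ S2)ᶜ).card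
      = (Fintype.card ι - k).choose k * (S1.card ^ k * S2.card ^ k
          * (Fintype.card α - S1.card - S2.card) ^ (Fintype.card ι - 2 * k)) := by
    intro T1 hT1
    obtain ⟨-, hT1c⟩ := mem_powersetCard.mp hT1
    have hdisjInner : ∀ T2 ∈ T1ᶜ.powersetCard k, ∀ T2' ∈ T1ᶜ.powersetCard k, T2 ≠ T2' →
        Disjoint (Fintype.piFinset fun i =>
            if i ∈ T1 then S1 else if i ∈ T2 then S2 else (S1 ∪ S2)ᶜ)
          (Fintype.piFinset fun i =>
            if i ∈ T1 then S1 else if i ∈ T2' then S2 else (S1 ∪ S2)ᶜ) := by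
      intro T2 h2 T2' h2' hne
      refine Finset.disjoint_left.mpr fun a ha ha' => hne ?_
      obtain ⟨hs2, -⟩ := mem_powersetCard.mp h2
      obtain ⟨hs2', -⟩ := mem_powersetCard.mp h2'
      rw [← (cell_mem_two S1 S2 hd T1 T2 (hdisjT T1 T2 hs2) a ha).2,
        (cell_mem_two S1 S2 hd T1 T2' (hdisjT T1 T2' hs2') a ha').2]
    rw [card_biUnion hdisjInner]
    have hcell : ∀ T2 ∈ T1ᶜ.powersetCard k,
          (Fintype.piFinset fun i : ι =>
            if i ∈ T1 then S1 else if i ∈ T2 then S2 else (S1 ∪ S2)ᶜ).card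
          = S1.card ^ k * S2.card ^ k
            * (Fintype.card α - S1.card - S2.card) ^ (Fintype.card ι - 2 * k) := by
        intro T2 hT2m
        obtain ⟨hsub, hT2c⟩ := mem_powersetCard.mp hT2m
        rw [Fintype.card_piFinset]
        have hsplit : ∀ i : ι, (if i ∈ T1 then S1 else if i ∈ T2 then S2 else (S1 ∪ S2)ᶜ).card
            = (if i ∈ T1 then S1.card else if i ∈ T2 then S2.card else (S1 ∪ S2)ᶜ.card) := by
          intro i; split <;> [rfl; split <;> rfl]
        rw [Finset.prod_congr rfl fun i _ => hsplit i]
        rw [← Finset.prod_mul_prod_compl T1]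
        rw [Finset.prod_congr rfl (fun i hi => if_pos hi), Finset.prod_const, hT1c]
        rw [← Finset.prod_sdiff hsub]
        have hrest : ∀ i ∈ T1ᶜ \ T2,
            (if i ∈ T1 then S1.card else if i ∈ T2 then S2.card else (S1 ∪ S2)ᶜ.card)
              = (S1 ∪ S2)ᶜ.card := by
          intro i hi
          obtain ⟨hi1, hi2⟩ := mem_sdiff.mp hi
          rw [if_neg (mem_compl.mp hi1), if_neg hi2]
        rw [Finset.prod_congr rfl hrest, Finset.prod_const]
        rw [Finset.prod_congr rfl (fun i (hi : i ∈ T2) => by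
          rw [if_neg (mem_compl.mp (hsub hi)), if_pos hi]), Finset.prod_const, hT2c]
        have hc1 : (T1ᶜ \ T2).card = Fintype.card ι - 2 * k := by
          rw [card_sdiff_of_subset hsub, card_compl, hT1c, hT2c, Nat.sub_sub, two_mul]
        have hc2 : (S1 ∪ S2)ᶜ.card = Fintype.card α - S1.card - S2.card := by
          rw [card_compl, card_union_of_disjoint hd, Nat.sub_sub]
        rw [hc1, hc2]; ring
    rw [Finset.sum_congr rfl hcell, Finset.sum_const, card_powersetCard, card_compl,
      hT1c, smul_eq_mul]
  rw [Finset.sum_congr rfl houter, Finset.sum_const, card_powersetCard, card_univ,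
    smul_eq_mul]
  ring

end CountLemmas

section PhiMap
variable {α : Type*} [Fintype α] [DecidableEq α]

def phiMap (n : ℕ) (ψ : α → α) (a : Fin n → α) : Fin (2 * n) → α := fun j =>
  if h : (j : ℕ) < n then a ⟨j, h⟩
  else ψ (a ⟨2 * n - 1 - (j : ℕ), by have := j.isLt; omega⟩)

variable {n : ℕ} {ψ : α → α}

lemma phiMap_lt (a : Fin n → α) (j : Fin (2 * n)) (h : (j : ℕ) < n) :
    phiMap n ψ a j = a ⟨j, h⟩ := dif_pos h

lemma phiMap_ge (a : Fin n → α) (j : Fin (2 * n)) (h : ¬ (j : ℕ) < n) :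
    phiMap n ψ a j = ψ (a ⟨2 * n - 1 - (j : ℕ), by have := j.isLt; omega⟩) := dif_neg h

lemma phiMap_mem (hψ : ∀ y, ψ (ψ y) = y) (a : Fin n → α) :
    phiMap n ψ a ∈ Xpsi α (2 * n) ψ := by
  refine mem_filter.mpr ⟨mem_univ _, fun j => ?_⟩
  have hj := j.isLt
  have hr : (j.rev : ℕ) = 2 * n - (j + 1) := Fin.val_rev j
  by_cases h : (j : ℕ) < n
  · have h' : ¬ ((j.rev : ℕ) < n) := by omega
    rw [phiMap_lt a j h, phiMap_ge a j.rev h']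
    congr 1
    apply congrArg
    exact Fin.ext (by simp only [hr]; omega)
  · have h' : (j.rev : ℕ) < n := by omega
    rw [phiMap_ge a j h, phiMap_lt a j.rev h', hψ]
    apply congrArg
    exact Fin.ext (by simp only [hr]; omega)

lemma phiMap_restrict (a : Fin n → α) (i : Fin n) :
    phiMap n ψ a (Fin.castLE (by omega) i) = a i := by
  rw [phiMap_lt a _ (by simpa using i.isLt)]
  exact congrArg a (Fin.ext rfl)

lemma sum_Xpsi_eq {M₀ : Type*} [AddCommMonoid M₀] (hψ : ∀ y, ψ (ψ y) = y)
    (f : (Fin (2 * n) → α) → M₀) :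
    ∑ x ∈ Xpsi α (2 * n) ψ, f x = ∑ a : Fin n → α, f (phiMap n ψ a) := by
  symm
  refine Finset.sum_nbij' (i := fun a => phiMap n ψ a)
    (j := fun x => fun i : Fin n => x (Fin.castLE (by omega) i))
    (fun a _ => phiMap_mem hψ a) (fun x _ => mem_univ _) ?_ ?_ (fun a _ => rfl)
  · intro a _
    funext i
    exact phiMap_restrict a i
  · intro x hx
    have hsym := (mem_filter.mp hx).2
    funext j
    show phiMap n ψ (fun i : Fin n => x (Fin.castLE (by omega) i)) j = x j
    have hj := j.isLt
    by_cases h : (j : ℕ) < n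
    · rw [phiMap_lt _ j h]
      apply congrArg
      exact Fin.ext rfl
    · rw [phiMap_ge _ j h]
      set w : Fin (2 * n) := Fin.castLE (by omega) (⟨2 * n - 1 - (j : ℕ), by omega⟩ : Fin n)
      have hwrev : w.rev = j := by
        apply Fin.ext
        rw [Fin.val_rev]
        show 2 * n - ((2 * n - 1 - (j : ℕ)) + 1) = j
        omega
      calc ψ (x w) = x w.rev := (hsym w).symm
        _ = x j := by rw [hwrev]

lemma psi_eq_iff (hψ : ∀ y, ψ (ψ y) = y) {u y : α} : ψ u = y ↔ u = ψ y := by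
  constructor
  · rintro rfl; rw [hψ]
  · rintro rfl; rw [hψ]

def eSum (n : ℕ) : Fin n ⊕ Fin n ≃ Fin (2 * n) :=
  finSumFinEquiv.trans (finCongr (two_mul n).symm)

lemma eSum_inl (i : Fin n) : ((eSum n (Sum.inl i)) : ℕ) = (i : ℕ) := by
  simp [eSum, finCongr_apply]

lemma eSum_inr (i : Fin n) : ((eSum n (Sum.inr i)) : ℕ) = n + (i : ℕ) := by
  simp [eSum, finCongr_apply]; omega

lemma occ_phiMap (hψ : ∀ y, ψ (ψ y) = y) (a : Fin n → α) (y : α) :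
    occCount (phiMap n ψ a) y
      = (univ.filter fun i : Fin n => a i = y).card
        + (univ.filter fun i : Fin n => a i = ψ y).card := by
  rw [occCount, Finset.card_filter, Finset.card_filter, Finset.card_filter]
  rw [← Equiv.sum_comp (eSum n) fun j => if phiMap n ψ a j = y then (1 : ℕ) else 0]
  rw [Fintype.sum_sum_type]
  congr 1
  · apply Finset.sum_congr rfl
    intro i _
    have hval : ((eSum n (Sum.inl i) : Fin (2 * n)) : ℕ) = (i : ℕ) := eSum_inl i
    have h : ((eSum n (Sum.inl i)) : ℕ) < n := by rw [hval]; exact i.isLt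
    rw [phiMap_lt a _ h]
    have heq : (⟨((eSum n (Sum.inl i)) : ℕ), h⟩ : Fin n) = i := Fin.ext hval
    rw [heq]
  · have hval : ∀ i : Fin n, ((eSum n (Sum.inr i) : Fin (2 * n)) : ℕ) = n + (i : ℕ) :=
      fun i => eSum_inr i
    have step : ∀ i : Fin n,
        (if phiMap n ψ a (eSum n (Sum.inr i)) = y then (1 : ℕ) else 0)
          = (if a (Fin.rev i) = ψ y then (1 : ℕ) else 0) := by
      intro i
      have h : ¬ (((eSum n (Sum.inr i)) : ℕ) < n) := by rw [hval]; omega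
      rw [phiMap_ge a _ h]
      have hidx : (⟨2 * n - 1 - ((eSum n (Sum.inr i) : Fin (2*n)) : ℕ), by
          have := (eSum n (Sum.inr i)).isLt; omega⟩ : Fin n) = Fin.rev i := by
        apply Fin.ext
        rw [Fin.val_rev]
        show 2 * n - 1 - ((eSum n (Sum.inr i)) : ℕ) = n - ((i : ℕ) + 1)
        have h2 := hval i
        have := i.isLt
        omega
      rw [hidx]
      by_cases hc : a (Fin.rev i) = ψ y
      · rw [if_pos ((psi_eq_iff hψ).mpr hc), if_pos hc]
      · rw [if_neg (fun hh => hc ((psi_eq_iff hψ).mp hh)), if_neg hc]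
    rw [Finset.sum_congr rfl fun i _ => step i]
    exact Fintype.sum_equiv Fin.revPerm _ _ fun i => rfl

end PhiMap

theorem stmt_9 {α : Type*} [Fintype α] [DecidableEq α] (n : ℕ) (hn : 1 ≤ n)
    (hcard : Fintype.card α = 2 * n) (ψ : α → α) (hψ : ∀ y, ψ (ψ y) = y)
    (k : ℕ) (hk : Odd k) :
    ∑ x ∈ Xpsi α (2 * n) ψ, (mCount x k) ^ 2
      = (∑ x ∈ Xpsi α (2 * n) ψ, mCount x k)
        + (Fintype.card α - (fixPts α ψ).card) * n.choose k * 2 ^ k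
            * (2 * n - 2) ^ (n - k)
        + (Fintype.card α - (fixPts α ψ).card)
            * ((Fintype.card α - (fixPts α ψ).card) - 2)
            * n.choose k * 2 ^ k * (n - k).choose k * 2 ^ k
            * (2 * n - 4) ^ (n - 2 * k) := by
  classical
  set F : Finset α := univ.filter (fun y => ¬ ψ y = y) with hFdef
  have hFcard : F.card = Fintype.card α - (fixPts α ψ).card := by
    have hFc : F = (fixPts α ψ)ᶜ := by
      ext y; simp [hFdef, fixPts]
    rw [hFc, card_compl]
  set T1v : ℕ := n.choose k * 2 ^ k * (2 * n - 2) ^ (n - k) with hT1v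
  set T2v : ℕ := n.choose k * 2 ^ k * (n - k).choose k * 2 ^ k * (2 * n - 4) ^ (n - 2 * k)
    with hT2v
  -- indicator notation (as plain terms)
  -- basic facts
  have hoccsym : ∀ (y : α) (a : Fin n → α),
      occCount (phiMap n ψ a) (ψ y) = occCount (phiMap n ψ a) y := by
    intro y a
    rw [occ_phiMap hψ, occ_phiMap hψ, hψ y, Nat.add_comm]
  have hNfix : ∀ y : α, ψ y = y → ∀ a : Fin n → α,
      (if occCount (phiMap n ψ a) y = k then (1 : ℕ) else 0) = 0 := by
    intro y hy a
    rw [if_neg]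
    intro h
    rw [occ_phiMap hψ, hy] at h
    have heven : Even ((univ.filter fun i : Fin n => a i = y).card
        + (univ.filter fun i : Fin n => a i = y).card) := ⟨_, rfl⟩
    rw [h] at heven
    exact (Nat.not_odd_iff_even.mpr heven) hk
  have h2card : ∀ y : α, ¬ ψ y = y → ({y, ψ y} : Finset α).card = 2 := by
    intro y hy
    rw [card_insert_of_notMem (by simp only [mem_singleton]; exact fun h => hy h.symm),
      card_singleton]
  have hocc_set : ∀ y : α, ¬ ψ y = y → ∀ a : Fin n → α,
      occCount (phiMap n ψ a) y = (univ.filter fun i => a i ∈ ({y, ψ y} : Finset α)).card := by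
    intro y hy a
    rw [occ_phiMap hψ]
    have hsplit : (univ.filter fun i : Fin n => a i ∈ ({y, ψ y} : Finset α))
        = (univ.filter fun i => a i = y) ∪ (univ.filter fun i => a i = ψ y) := by
      rw [← Finset.filter_or]
      apply Finset.filter_congr
      intro i _
      simp [mem_insert, mem_singleton]
    rw [hsplit, card_union_of_disjoint]
    refine Finset.disjoint_left.mpr fun i hi1 hi2 => ?_
    simp only [mem_filter, mem_univ, true_and] at hi1 hi2
    exact hy (by rw [← hi2, hi1])
  -- the T1 count
  have hone : ∀ y : α, ¬ ψ y = y →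
      (∑ a : Fin n → α, if occCount (phiMap n ψ a) y = k then (1 : ℕ) else 0) = T1v := by
    intro y hy
    rw [← Finset.card_filter]
    have hfc : (univ.filter fun a : Fin n → α => occCount (phiMap n ψ a) y = k)
        = univ.filter fun a : Fin n → α =>
            (univ.filter fun i => a i ∈ ({y, ψ y} : Finset α)).card = k := by
      apply Finset.filter_congr
      intro a _
      rw [hocc_set y hy a]
    rw [hfc, aux_count_one, h2card y hy, Fintype.card_fin, hcard, hT1v]
  -- the T2 count
  have hmul : ∀ (P Q : Prop) [Decidable P] [Decidable Q],
      (if P then (1 : ℕ) else 0) * (if Q then 1 else 0) = if P ∧ Q then 1 else 0 := by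
    intro P Q _ _
    by_cases hP : P <;> by_cases hQ : Q <;> simp [hP, hQ]
  have htwo : ∀ y z : α, ¬ ψ y = y → ¬ ψ z = z → z ≠ y → z ≠ ψ y →
      (∑ a : Fin n → α, (if occCount (phiMap n ψ a) y = k then (1 : ℕ) else 0)
        * (if occCount (phiMap n ψ a) z = k then 1 else 0)) = T2v := by
    intro y z hy hz hzy hzpy
    rw [Finset.sum_congr rfl fun a _ => hmul _ _]
    rw [← Finset.card_filter]
    have hdisj : Disjoint ({y, ψ y} : Finset α) ({z, ψ z} : Finset α) := by
      refine Finset.disjoint_left.mpr fun w hw hw' => ?_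
      simp only [mem_insert, mem_singleton] at hw hw'
      rcases hw with rfl | rfl <;> rcases hw' with h | h
      · exact hzy h.symm
      · exact hzpy (by rw [← hψ z, ← h])
      · exact hzpy h.symm
      · exact hzy (by rw [← hψ z, ← h, hψ])
    have hfc : (univ.filter fun a : Fin n → α =>
          occCount (phiMap n ψ a) y = k ∧ occCount (phiMap n ψ a) z = k)
        = univ.filter fun a : Fin n → α =>
            (univ.filter fun i => a i ∈ ({y, ψ y} : Finset α)).card = k
            ∧ (univ.filter fun i => a i ∈ ({z, ψ z} : Finset α)).card = k := by
      apply Finset.filter_congr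
      intro a _
      rw [hocc_set y hy a, hocc_set z hz a]
    rw [hfc, aux_count_two _ _ hdisj, h2card y hy, h2card z hz, Fintype.card_fin, hcard,
      hT2v]
    have h4 : 2 * n - 2 - 2 = 2 * n - 4 := by omega
    rw [h4]
  -- sums over z for a fixed non-fixed y
  have hzsum : ∀ y : α, ¬ ψ y = y →
      (∑ z : α, ∑ a : Fin n → α,
        (if occCount (phiMap n ψ a) y = k then (1 : ℕ) else 0)
          * (if occCount (phiMap n ψ a) z = k then 1 else 0))
      = T1v + (T1v + (F.card - 2) * T2v) := by
    intro y hy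
    rw [← Finset.add_sum_erase _ _ (mem_univ y)]
    have hpy : ψ y ∈ univ.erase y := mem_erase.mpr ⟨hy, mem_univ _⟩
    rw [← Finset.add_sum_erase _ _ hpy]
    have hdiag : (∑ a : Fin n → α,
        (if occCount (phiMap n ψ a) y = k then (1 : ℕ) else 0)
          * (if occCount (phiMap n ψ a) y = k then 1 else 0)) = T1v := by
      have hsq1 : ∀ a : Fin n → α,
          (if occCount (phiMap n ψ a) y = k then (1 : ℕ) else 0)
            * (if occCount (phiMap n ψ a) y = k then 1 else 0)
          = (if occCount (phiMap n ψ a) y = k then 1 else 0) := fun a => by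
        by_cases h : occCount (phiMap n ψ a) y = k <;> simp [h]
      rw [Finset.sum_congr rfl fun a _ => hsq1 a]
      exact hone y hy
    have hpair : (∑ a : Fin n → α,
        (if occCount (phiMap n ψ a) y = k then (1 : ℕ) else 0)
          * (if occCount (phiMap n ψ a) (ψ y) = k then 1 else 0)) = T1v := by
      have hsq2 : ∀ a : Fin n → α,
          (if occCount (phiMap n ψ a) y = k then (1 : ℕ) else 0)
            * (if occCount (phiMap n ψ a) (ψ y) = k then 1 else 0)
          = (if occCount (phiMap n ψ a) y = k then 1 else 0) := fun a => by
        rw [hoccsym y a]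
        by_cases h : occCount (phiMap n ψ a) y = k <;> simp [h]
      rw [Finset.sum_congr rfl fun a _ => hsq2 a]
      exact hone y hy
    have hrest : (∑ z ∈ (univ.erase y).erase (ψ y), ∑ a : Fin n → α,
        (if occCount (phiMap n ψ a) y = k then (1 : ℕ) else 0)
          * (if occCount (phiMap n ψ a) z = k then 1 else 0))
        = (F.card - 2) * T2v := by
      have hterm : ∀ z ∈ (univ.erase y).erase (ψ y),
          (∑ a : Fin n → α,
            (if occCount (phiMap n ψ a) y = k then (1 : ℕ) else 0)
              * (if occCount (phiMap n ψ a) z = k then 1 else 0))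
          = if ¬ ψ z = z then T2v else 0 := by
        intro z hzmem
        obtain ⟨hzpy, hz'⟩ := mem_erase.mp hzmem
        obtain ⟨hzy, -⟩ := mem_erase.mp hz'
        by_cases hz : ψ z = z
        · rw [if_neg (by simpa using hz)]
          exact Finset.sum_eq_zero fun a _ => by rw [hNfix z hz a, mul_zero]
        · rw [if_pos hz]
          exact htwo y z hy hz hzy hzpy
      rw [Finset.sum_congr rfl hterm, ← Finset.sum_filter, Finset.sum_const, smul_eq_mul]
      congr 1
      have hfe : ((univ.erase y).erase (ψ y)).filter (fun z => ¬ ψ z = z)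
          = (F.erase y).erase (ψ y) := by
        ext z
        simp only [mem_filter, mem_erase, hFdef, mem_univ, true_and, and_true]
        tauto
      rw [hfe]
      have hyF : y ∈ F := mem_filter.mpr ⟨mem_univ _, hy⟩
      have hpyF : ψ y ∈ F.erase y := by
        refine mem_erase.mpr ⟨hy, mem_filter.mpr ⟨mem_univ _, ?_⟩⟩
        rw [hψ]
        exact fun h => hy h.symm
      rw [card_erase_of_mem hpyF, card_erase_of_mem hyF]
      omega
    rw [hdiag, hpair, hrest]
  -- total second moment
  have hLHS : (∑ x ∈ Xpsi α (2 * n) ψ, (mCount x k) ^ 2)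
      = F.card * (T1v + (T1v + (F.card - 2) * T2v)) := by
    rw [sum_Xpsi_eq hψ]
    have hmexp : ∀ a : Fin n → α, (mCount (phiMap n ψ a) k) ^ 2
        = ∑ y : α, ∑ z : α,
            (if occCount (phiMap n ψ a) y = k then (1 : ℕ) else 0)
              * (if occCount (phiMap n ψ a) z = k then 1 else 0) := by
      intro a
      rw [mCount, Finset.card_filter, sq, Finset.sum_mul_sum]
    rw [Finset.sum_congr rfl fun a _ => hmexp a]
    rw [Finset.sum_comm]
    rw [Finset.sum_congr rfl fun y (_ : y ∈ univ) => Finset.sum_comm]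
    have hy_all : ∀ y : α, (∑ z : α, ∑ a : Fin n → α,
        (if occCount (phiMap n ψ a) y = k then (1 : ℕ) else 0)
          * (if occCount (phiMap n ψ a) z = k then 1 else 0))
        = if ¬ ψ y = y then T1v + (T1v + (F.card - 2) * T2v) else 0 := by
      intro y
      by_cases hy : ψ y = y
      · rw [if_neg (by simpa using hy)]
        exact Finset.sum_eq_zero fun z _ => Finset.sum_eq_zero fun a _ => by
          rw [hNfix y hy a, zero_mul]
      · rw [if_pos hy]
        exact hzsum y hy
    rw [Finset.sum_congr rfl fun y _ => hy_all y, ← Finset.sum_filter, Finset.sum_const,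
      smul_eq_mul]
  -- total first moment
  have hRHS1 : (∑ x ∈ Xpsi α (2 * n) ψ, mCount x k) = F.card * T1v := by
    rw [sum_Xpsi_eq hψ]
    have hmexp : ∀ a : Fin n → α, (mCount (phiMap n ψ a) k)
        = ∑ y : α, (if occCount (phiMap n ψ a) y = k then (1 : ℕ) else 0) := by
      intro a
      rw [mCount, Finset.card_filter]
    rw [Finset.sum_congr rfl fun a _ => hmexp a, Finset.sum_comm]
    have hy_all : ∀ y : α, (∑ a : Fin n → α,
        (if occCount (phiMap n ψ a) y = k then (1 : ℕ) else 0))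
        = if ¬ ψ y = y then T1v else 0 := by
      intro y
      by_cases hy : ψ y = y
      · rw [if_neg (by simpa using hy)]
        exact Finset.sum_eq_zero fun a _ => hNfix y hy a
      · rw [if_pos hy]
        exact hone y hy
    rw [Finset.sum_congr rfl fun y _ => hy_all y, ← Finset.sum_filter, Finset.sum_const,
      smul_eq_mul]
  rw [hLHS, hRHS1, ← hFcard, hT1v, hT2v]
  ring
end
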